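/- Conversely, suppose x ∈ [l,u], y ∈ {0,1}, and z satisfy z ≥ wᵀx + b, z ≥ 0, z ≤ wᵀx + b − M⁻(1−y), and z ≤ M⁺y, where M⁺ ≥ 0 and M⁻ ≤ 0 are the max and min of wᵀx + b on [l,u]. If additionally M⁺ > 0 and M⁻ < 0, then z = max{0, wᵀx + b}. -/
import Mathlib

theorem stmt_2 (n : ℕ) (w l u : Fin n → ℝ) (b Mp Mm : ℝ)
    (hMp : IsGreatest ((fun x => (∑ i, w i * x i) + b) ''
        {x : Fin n → ℝ | ∀ i, x i ∈ Set.Icc (l i) (u i)}) Mp)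
    (hMm : IsLeast ((fun x => (∑ i, w i * x i) + b) ''
        {x : Fin n → ℝ | ∀ i, x i ∈ Set.Icc (l i) (u i)}) Mm)
    (hMp0 : 0 < Mp) (hMm0 : Mm < 0)
    (x : Fin n → ℝ) (hx : ∀ i, x i ∈ Set.Icc (l i) (u i))
    (y z : ℝ) (hy : y ∈ ({0, 1} : Set ℝ))
    (h1 : z ≥ (∑ i, w i * x i) + b)
    (h2 : z ≥ 0)
    (h3 : z ≤ (∑ i, w i * x i) + b - Mm * (1 - y))
    (h4 : z ≤ Mp * y) :
    z = max 0 ((∑ i, w i * x i) + b) := by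
  rcases hy with hy | hy <;> subst hy
  · have hz : z = 0 := le_antisymm (by linarith) h2
    rw [hz, max_eq_left (by linarith)]
  · have hz : z = (∑ i, w i * x i) + b := le_antisymm (by linarith) h1
    rw [hz, max_eq_right (by linarith)]
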